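/- arXiv:2309.13828 — 2 statements merged into one kernel-verified Lean document; each statement's English description precedes it below -/
import Mathlib

section
/- Let $a = 4\pi G > 0$ with $aN \le 1$ for an integer $N \ge 1$, $m > 0$, and $\delta \in (0, 1/2)$. Define $v_\delta(x) = \sum_{s=1}^N \log\frac{\delta+|x-p_s|^2}{1+|x-p_s|^2}$. Then for each fixed $x$, $-\big(e^{v_\delta - e^{v_\delta}} \prod_{s=1}^N (\delta + |x-p_s|^2)^{-1}\big)^{a}(1+e^{v_\delta})^m (e^{v_\delta}-1) \ge e^{a(v_\delta - 1) + \xi} \Big(\sum_{s=1}^N \frac{1}{1+\xi_s}\cdot\frac{1-\delta}{\delta + |x-p_s|^2}\Big) \prod_{s=1}^N (1 + |x-p_s|^2)^{-a}$ for some $\xi \in (v_\delta, 0)$ and $\xi_s \in \big(0, \frac{1-\delta}{\delta+|x-p_s|^2}\big)$; in particular the left-hand side is bounded below by a positive quantity decaying like $|x|^{-2aN - 2}$ as $|x| \to \infty$. -/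
/-!
Write `tₛ = (1-δ)/(δ+|x-pₛ|²)`, so that `-v_δ(x) = ∑ log (1 + tₛ) > 0`. The mean value theorem
for `log (1 + ·)` on `[0, tₛ]` gives `ξₛ` with `tₛ/(1+ξₛ) = log (1 + tₛ)`, so the sum in the
lower bound is exactly `-v_δ(x)`; the mean value theorem for `exp` on `[v_δ(x), 0]` gives `ξ` with
`e^ξ (-v_δ) = 1 - e^{v_δ}`. The lower bound thus becomes `e^{a(v_δ-1)} (1 - e^{v_δ}) ∏ (1+|x-pₛ|²)^{-a}`,
and each factor is dominated by its counterpart in the other side, using `e^{v_δ} ≤ 1`, `δ ≤ 1`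
and `(1 + e^{v_δ})^m ≥ 1`.
-/

open Real Set Finset

theorem exists_mem_Ioo_exp_mul_neg_eq {v : ℝ} (hv : v < 0) :
    ∃ ξ ∈ Ioo v 0, exp ξ * -v = 1 - exp v := by
  obtain ⟨ξ, hξ, hslope⟩ := exists_hasDerivAt_eq_slope exp exp hv
    continuous_exp.continuousOn fun y _ => hasDerivAt_exp y
  refine ⟨ξ, hξ, ?_⟩
  rw [hslope, exp_zero]
  field_simp [hv.ne]
  ring

theorem exists_mem_Ioo_one_div_one_add_mul_eq_log {t : ℝ} (ht : 0 < t) :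
    ∃ ξ ∈ Ioo 0 t, 1 / (1 + ξ) * t = log (1 + t) := by
  obtain ⟨ξ, hξ, hslope⟩ := exists_hasDerivAt_eq_slope (fun y => log (1 + y))
    (fun y => 1 / (1 + y)) ht
    ((continuous_const.add continuous_id).continuousOn.log fun y hy => by
      show 1 + y ≠ 0; linarith [hy.1])
    fun y hy => by
      simpa [one_div] using ((hasDerivAt_id y).const_add 1).log (by simp; linarith [hy.1])
  refine ⟨ξ, hξ, ?_⟩
  rw [hslope, add_zero, log_one, sub_zero, sub_zero, div_mul_cancel₀ _ ht.ne']

theorem log_div_one_add_eq_neg_log_one_add {δ r : ℝ} (hr : 0 < δ + r) :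
    log ((δ + r) / (1 + r)) = -log (1 + (1 - δ) / (δ + r)) := by
  rw [← log_inv]
  congr 1
  field_simp
  ring

theorem prod_one_add_rpow_neg_le_prod_inv_rpow {ι : Type*} (s : Finset ι) {a δ : ℝ}
    (ha : 0 ≤ a) (hδ : 0 < δ) (hδ1 : δ ≤ 1) {r : ι → ℝ} (hr : ∀ i ∈ s, 0 ≤ r i) :
    ∏ i ∈ s, (1 + r i) ^ (-a) ≤ (∏ i ∈ s, (δ + r i)⁻¹) ^ a := by
  have hpos : ∀ i ∈ s, 0 < δ + r i := fun i hi => by linarith [hr i hi]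
  rw [← finsetProd_rpow _ _ fun i hi => (inv_pos.2 (hpos i hi)).le]
  refine prod_le_prod (fun i hi => by have := hr i hi; positivity) fun i hi => ?_
  rw [inv_rpow (hpos i hi).le, ← rpow_neg (hpos i hi).le]
  exact rpow_le_rpow_of_nonpos (hpos i hi) (by linarith) (by linarith)

theorem exp_mul_sub_one_le_exp_sub_exp_rpow {a v : ℝ} (ha : 0 ≤ a) (hv : v ≤ 0) :
    exp (a * (v - 1)) ≤ exp (v - exp v) ^ a := by
  rw [← exp_mul, mul_comm]
  gcongr
  exact exp_le_one_iff.2 hv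

theorem exp_mul_neg_mul_le {a m v ξ P Q : ℝ} (ha : 0 ≤ a) (hm : 0 ≤ m) (hv : v < 0)
    (hξ : exp ξ * -v = 1 - exp v) (hP : 0 ≤ P) (hQ : 0 ≤ Q) (hPQ : P ≤ Q ^ a) :
    exp (a * (v - 1) + ξ) * -v * P ≤
      -((exp (v - exp v) * Q) ^ a * (1 + exp v) ^ m * (exp v - 1)) := by
  have h1 : 0 < 1 - exp v := by linarith [exp_lt_one_iff.2 hv]
  have hm1 : 1 ≤ (1 + exp v) ^ m := one_le_rpow (by linarith [exp_pos v]) hm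
  rw [exp_add, mul_assoc (exp _), hξ, mul_rpow (exp_pos _).le hQ]
  calc exp (a * (v - 1)) * (1 - exp v) * P
      ≤ exp (v - exp v) ^ a * (1 - exp v) * Q ^ a := by
        gcongr
        exact exp_mul_sub_one_le_exp_sub_exp_rpow ha hv.le
    _ = exp (v - exp v) ^ a * Q ^ a * 1 * (1 - exp v) := by ring
    _ ≤ exp (v - exp v) ^ a * Q ^ a * (1 + exp v) ^ m * (1 - exp v) := by gcongr
    _ = _ := by ring

theorem stmt_14_general (a m δ : ℝ) (N : ℕ) (hN : 1 ≤ N)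
    (ha : 0 < a) (hm : 0 < m)
    (hδ : δ ∈ Set.Ioo (0 : ℝ) (1 / 2))
    (p : Fin N → EuclideanSpace ℝ (Fin 2))
    (vδ : EuclideanSpace ℝ (Fin 2) → ℝ)
    (hvδ : ∀ x, vδ x = ∑ s, Real.log ((δ + ‖x - p s‖ ^ 2) / (1 + ‖x - p s‖ ^ 2))) :
    ∀ x : EuclideanSpace ℝ (Fin 2),
      ∃ ξ ∈ Set.Ioo (vδ x) 0, ∃ ξs : Fin N → ℝ,
        (∀ s, ξs s ∈ Set.Ioo 0 ((1 - δ) / (δ + ‖x - p s‖ ^ 2))) ∧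
        Real.exp (a * (vδ x - 1) + ξ) *
            (∑ s, (1 / (1 + ξs s)) * ((1 - δ) / (δ + ‖x - p s‖ ^ 2))) *
            ∏ s, (1 + ‖x - p s‖ ^ 2) ^ (-a) ≤
          -((Real.exp (vδ x - Real.exp (vδ x)) * ∏ s, (δ + ‖x - p s‖ ^ 2)⁻¹) ^ a *
            (1 + Real.exp (vδ x)) ^ m * (Real.exp (vδ x) - 1)) := by
  intro x
  obtain ⟨hδ0, hδ1⟩ := hδ
  set t : Fin N → ℝ := fun s => (1 - δ) / (δ + ‖x - p s‖ ^ 2)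
  have ht : ∀ s, 0 < t s := fun s => div_pos (by linarith) (by positivity)
  have hv : vδ x = -∑ s, log (1 + t s) := by
    rw [hvδ, ← sum_neg_distrib]
    exact sum_congr rfl fun s _ => log_div_one_add_eq_neg_log_one_add (by positivity)
  have hv_neg : vδ x < 0 := by
    have : Nonempty (Fin N) := ⟨⟨0, hN⟩⟩
    rw [hv, neg_lt_zero]
    exact sum_pos (fun s _ => log_pos (by linarith [ht s])) univ_nonempty
  choose ξs hξs_mem hξs using fun s => exists_mem_Ioo_one_div_one_add_mul_eq_log (ht s)
  obtain ⟨ξ, hξ_mem, hξ⟩ := exists_mem_Ioo_exp_mul_neg_eq hv_neg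
  refine ⟨ξ, hξ_mem, ξs, hξs_mem, ?_⟩
  have hsum : ∑ s, 1 / (1 + ξs s) * t s = -vδ x := by
    rw [hv, neg_neg]
    exact sum_congr rfl fun s _ => hξs s
  rw [hsum]
  exact exp_mul_neg_mul_le ha.le hm.le hv_neg hξ (prod_nonneg fun s _ => by positivity)
    (prod_nonneg fun s _ => by positivity)
    (prod_one_add_rpow_neg_le_prod_inv_rpow _ ha.le hδ0 (by linarith) fun s _ => by positivity)

/-- Key pointwise lower bound (inequality (3.19)): for each `x` there are
mean-value points `ξ ∈ (v_δ(x), 0)` and `ξₛ ∈ (0, (1-δ)/(δ+|x-pₛ|²))` with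
`-(e^{v_δ - e^{v_δ}} ∏ (δ+|x-pₛ|²)⁻¹)^a (1+e^{v_δ})^m (e^{v_δ}-1)
  ≥ e^{a(v_δ-1)+ξ} (∑ (1+ξₛ)⁻¹ (1-δ)/(δ+|x-pₛ|²)) ∏ (1+|x-pₛ|²)^{-a}`. -/
theorem stmt_14 (G a m δ : ℝ) (N : ℕ) (hN : 1 ≤ N)
    (haG : a = 4 * Real.pi * G) (ha : 0 < a) (haN : a * N ≤ 1) (hm : 0 < m)
    (hδ : δ ∈ Set.Ioo (0 : ℝ) (1 / 2))
    (p : Fin N → EuclideanSpace ℝ (Fin 2))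
    (vδ : EuclideanSpace ℝ (Fin 2) → ℝ)
    (hvδ : ∀ x, vδ x = ∑ s, Real.log ((δ + ‖x - p s‖ ^ 2) / (1 + ‖x - p s‖ ^ 2))) :
    ∀ x : EuclideanSpace ℝ (Fin 2),
      ∃ ξ ∈ Set.Ioo (vδ x) 0, ∃ ξs : Fin N → ℝ,
        (∀ s, ξs s ∈ Set.Ioo 0 ((1 - δ) / (δ + ‖x - p s‖ ^ 2))) ∧
        Real.exp (a * (vδ x - 1) + ξ) *
            (∑ s, (1 / (1 + ξs s)) * ((1 - δ) / (δ + ‖x - p s‖ ^ 2))) *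
            ∏ s, (1 + ‖x - p s‖ ^ 2) ^ (-a) ≤
          -((Real.exp (vδ x - Real.exp (vδ x)) * ∏ s, (δ + ‖x - p s‖ ^ 2)⁻¹) ^ a *
            (1 + Real.exp (vδ x)) ^ m * (Real.exp (vδ x) - 1)) :=
  stmt_14_general a m δ N hN ha hm hδ p vδ hvδ
end

section
/- Let $a > 0$, $m > 0$, $\beta > 0$, $N \ge 1$ an integer, and define $h(v) = \beta e^{a(v - e^v)}(1 + e^v)^m (e^v - 1)$. Then there exists $t_0 \in \mathbb{R}$ such that the operator $T(w)(t) = \int_{-\infty}^{t} (t - \tau)\, h(2N\tau + w(\tau))\, d\tau$ maps the set $\mathcal{X} = \{w \in C((-\infty, t_0]) : \lim_{t\to-\infty} w(t) = 0, \ \sup_{t \le t_0}|w(t)| \le 1\}$ into itself and is a contraction in the sup norm; consequently $T$ has a unique fixed point in $\mathcal{X}$. -/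
open Real Set MeasureTheory Filter intervalIntegral

lemma aux_mulexp_tendsto (c : ℝ) (hc : 0 < c) :
    Tendsto (fun x => Real.exp (c * x)) atBot (nhds 0) :=
  Real.tendsto_exp_atBot.comp (Tendsto.const_mul_atBot hc tendsto_id)

lemma aux_expc_integrableOn (c t : ℝ) (hc : 0 < c) :
    IntegrableOn (fun x => Real.exp (c * x)) (Set.Iic t) := by
  apply MeasureTheory.integrableOn_Iic_of_intervalIntegral_norm_bounded
    (Real.exp (c * t) / c) t (a := id) (l := atBot)
    (fun i => (Real.continuous_exp.comp (continuous_const.mul continuous_id)).integrableOn_Ioc)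
    tendsto_id
  filter_upwards with i
  simp only [Function.comp, id]
  have : ∫ x in i..t, ‖Real.exp (c * x)‖ = c⁻¹ • ∫ x in (c * i)..(c * t), Real.exp x := by
    simp_rw [Real.norm_eq_abs, abs_of_pos (Real.exp_pos _)]
    exact intervalIntegral.integral_comp_mul_left _ hc.ne'
  change ∫ x in i..t, ‖Real.exp (c * x)‖ ≤ Real.exp (c * t) / c
  rw [this, integral_exp, smul_eq_mul]
  rw [div_eq_inv_mul]
  have := (Real.exp_pos (c * i)).le
  nlinarith [inv_pos.mpr hc]

lemma aux_expc_integral (c t : ℝ) (hc : 0 < c) :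
    ∫ x in Set.Iic t, Real.exp (c * x) = Real.exp (c * t) / c := by
  have hder : ∀ x ∈ Set.Iic t, HasDerivAt (fun x => Real.exp (c * x) / c)
      (Real.exp (c * x)) x := by
    intro x _
    have h0 : HasDerivAt (fun y : ℝ => c * y) c x := by
      simpa using (hasDerivAt_id x).const_mul c
    have h1 : HasDerivAt (fun x => Real.exp (c * x)) (Real.exp (c * x) * c) x :=
      (Real.hasDerivAt_exp (c * x)).comp x h0
    have := h1.div_const c
    rwa [mul_div_assoc, div_self hc.ne', mul_one] at this
  have htend : Tendsto (fun x => Real.exp (c * x) / c) atBot (nhds 0) := by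
    have := (aux_mulexp_tendsto c hc).div_const c
    rwa [zero_div] at this
  have := MeasureTheory.integral_Iic_of_hasDerivAt_of_tendsto' hder
    (aux_expc_integrableOn c t hc) htend
  rw [this, sub_zero]

lemma aux_lin_le_exp (s x : ℝ) (hs : 0 < s) : x ≤ (1 / s) * Real.exp (s * x) := by
  have h1 : s * x ≤ Real.exp (s * x) :=
    le_trans (by linarith [Real.add_one_le_exp (s*x)]) le_rfl
  rw [div_mul_eq_mul_div, one_mul, le_div_iff₀ hs]
  linarith

lemma aux_kernel_integrableOn (c t : ℝ) (hc : 0 < c) :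
    IntegrableOn (fun τ => (t - τ) * Real.exp (c * τ)) (Set.Iic t) := by
  have hmaj : IntegrableOn
      (fun τ => (2 / c) * Real.exp (c / 2 * t) * Real.exp (c / 2 * τ)) (Set.Iic t) :=
    (aux_expc_integrableOn (c/2) t (half_pos hc)).const_mul _
  refine hmaj.mono' ?_ ?_
  · exact ((continuous_const.sub continuous_id).mul
      (Real.continuous_exp.comp (continuous_const.mul continuous_id))).aestronglyMeasurable
  · rw [MeasureTheory.ae_restrict_iff' measurableSet_Iic]
    filter_upwards with τ hτ
    have hτt : τ ≤ t := hτ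
    have h1 : t - τ ≤ (2 / c) * Real.exp (c / 2 * (t - τ)) := by
      have := aux_lin_le_exp (c/2) (t - τ) (half_pos hc)
      rwa [show (1:ℝ) / (c/2) = 2 / c by field_simp] at this
    have h2 : (0:ℝ) ≤ t - τ := by linarith
    rw [Real.norm_eq_abs, abs_of_nonneg (mul_nonneg h2 (Real.exp_pos _).le)]
    calc (t - τ) * Real.exp (c * τ)
        ≤ (2 / c) * Real.exp (c / 2 * (t - τ)) * Real.exp (c * τ) := by
          exact mul_le_mul_of_nonneg_right h1 (Real.exp_pos _).le
      _ = (2 / c) * Real.exp (c / 2 * t) * Real.exp (c / 2 * τ) := by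
          rw [mul_assoc, mul_assoc, ← Real.exp_add, ← Real.exp_add]; ring_nf

lemma aux_kernel_integral_le (c t : ℝ) (hc : 0 < c) :
    ∫ τ in Set.Iic t, (t - τ) * Real.exp (c * τ) ≤ 4 / c ^ 2 * Real.exp (c * t) := by
  have hmaj : IntegrableOn
      (fun τ => (2 / c) * Real.exp (c / 2 * t) * Real.exp (c / 2 * τ)) (Set.Iic t) :=
    (aux_expc_integrableOn (c/2) t (half_pos hc)).const_mul _
  have hle : ∫ τ in Set.Iic t, (t - τ) * Real.exp (c * τ)
      ≤ ∫ τ in Set.Iic t, (2 / c) * Real.exp (c / 2 * t) * Real.exp (c / 2 * τ) := by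
    refine MeasureTheory.setIntegral_mono_on (aux_kernel_integrableOn c t hc) hmaj
      measurableSet_Iic ?_
    intro τ hτ
    have hτt : τ ≤ t := hτ
    have h1 : t - τ ≤ (2 / c) * Real.exp (c / 2 * (t - τ)) := by
      have := aux_lin_le_exp (c/2) (t - τ) (half_pos hc)
      rwa [show (1:ℝ) / (c/2) = 2 / c by field_simp] at this
    calc (t - τ) * Real.exp (c * τ)
        ≤ (2 / c) * Real.exp (c / 2 * (t - τ)) * Real.exp (c * τ) :=
          mul_le_mul_of_nonneg_right h1 (Real.exp_pos _).le
      _ = (2 / c) * Real.exp (c / 2 * t) * Real.exp (c / 2 * τ) := by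
          rw [mul_assoc, mul_assoc, ← Real.exp_add, ← Real.exp_add]; ring_nf
  refine hle.trans ?_
  rw [MeasureTheory.integral_const_mul, aux_expc_integral (c/2) t (half_pos hc)]
  have e : Real.exp (c * t) = Real.exp (c/2*t) * Real.exp (c/2*t) := by
    rw [← Real.exp_add]; ring_nf
  rw [e]
  apply le_of_eq
  field_simp
  ring
open Real Set MeasureTheory Filter

noncomputable def Hder (a m β : ℝ) : ℝ → ℝ := fun v =>
  (β * (a * (1 - Real.exp v) * Real.exp (a * (v - Real.exp v))) * (1 + Real.exp v) ^ m
    + β * Real.exp (a * (v - Real.exp v)) * (m * (1 + Real.exp v) ^ (m - 1) * Real.exp v))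
    * (Real.exp v - 1)
  + β * Real.exp (a * (v - Real.exp v)) * (1 + Real.exp v) ^ m * Real.exp v

lemma Hfun_hasDerivAt (a m β v : ℝ) :
    HasDerivAt (fun v => β * Real.exp (a * (v - Real.exp v)) * (1 + Real.exp v) ^ m
      * (Real.exp v - 1)) (Hder a m β v) v := by
  have hQ : HasDerivAt (fun v => Real.exp v - 1) (Real.exp v) v :=
    (Real.hasDerivAt_exp v).sub_const 1
  have hinner : HasDerivAt (fun v => a * (v - Real.exp v)) (a * (1 - Real.exp v)) v := by
    simpa using ((hasDerivAt_id v).sub (Real.hasDerivAt_exp v)).const_mul a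
  have hE : HasDerivAt (fun v => Real.exp (a * (v - Real.exp v)))
      (a * (1 - Real.exp v) * Real.exp (a * (v - Real.exp v))) v := by
    simpa [mul_comm, Function.comp_def] using (Real.hasDerivAt_exp _).comp v hinner
  have hbase : HasDerivAt (fun v => 1 + Real.exp v) (Real.exp v) v :=
    (Real.hasDerivAt_exp v).const_add 1
  have hP : HasDerivAt (fun v => (1 + Real.exp v) ^ m)
      (m * (1 + Real.exp v) ^ (m - 1) * Real.exp v) v := by
    have hpos : (0:ℝ) < 1 + Real.exp v := by positivity
    simpa [mul_assoc, Function.comp_def] using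
      (Real.hasDerivAt_rpow_const (p := m) (Or.inl hpos.ne')).comp v hbase
  have h1 := (hE.const_mul β).mul hP
  have h2 := h1.mul hQ
  convert h2 using 1 <;> rfl

lemma Hfun_bound (a m β v : ℝ) (ha : 0 < a) (hm : 0 < m) (hβ : 0 < β) (hv : v ≤ 0) :
    |β * Real.exp (a * (v - Real.exp v)) * (1 + Real.exp v) ^ m * (Real.exp v - 1)|
      ≤ β * 2 ^ m * Real.exp (a * v) := by
  have he1 : Real.exp v ≤ 1 := Real.exp_le_one_iff.2 hv
  have he0 : (0:ℝ) < Real.exp v := Real.exp_pos v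
  have hE : Real.exp (a * (v - Real.exp v)) ≤ Real.exp (a * v) := by
    apply Real.exp_le_exp.2; nlinarith
  have hP : (1 + Real.exp v) ^ m ≤ (2:ℝ) ^ m :=
    Real.rpow_le_rpow (by positivity) (by linarith) hm.le
  have hQ : |Real.exp v - 1| ≤ 1 := abs_le.2 ⟨by linarith, by linarith⟩
  have hPn : (0:ℝ) ≤ (1 + Real.exp v) ^ m := Real.rpow_nonneg (by positivity) m
  rw [abs_mul, abs_mul, abs_mul, abs_of_pos hβ, abs_of_pos (Real.exp_pos _),
    abs_of_nonneg hPn]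
  calc β * Real.exp (a * (v - Real.exp v)) * (1 + Real.exp v) ^ m * |Real.exp v - 1|
      ≤ β * Real.exp (a * v) * (2:ℝ) ^ m * 1 := by gcongr
    _ = β * 2 ^ m * Real.exp (a * v) := by ring

lemma Hder_bound (a m β v : ℝ) (ha : 0 < a) (hm : 0 < m) (hβ : 0 < β) (hv : v ≤ 0) :
    |Hder a m β v| ≤ β * 2 ^ m * (a + m + 1) * Real.exp (a * v) := by
  have he1 : Real.exp v ≤ 1 := Real.exp_le_one_iff.2 hv
  have he0 : (0:ℝ) < Real.exp v := Real.exp_pos v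
  have hE : Real.exp (a * (v - Real.exp v)) ≤ Real.exp (a * v) := by
    apply Real.exp_le_exp.2; nlinarith
  have hEn : (0:ℝ) < Real.exp (a * (v - Real.exp v)) := Real.exp_pos _
  have hP : (1 + Real.exp v) ^ m ≤ (2:ℝ) ^ m :=
    Real.rpow_le_rpow (by positivity) (by linarith) hm.le
  have hPm1 : (1 + Real.exp v) ^ (m - 1) ≤ (2:ℝ) ^ m :=
    le_trans (Real.rpow_le_rpow_of_exponent_le (by linarith) (by linarith)) hP
  have hQ : |Real.exp v - 1| ≤ 1 := abs_le.2 ⟨by linarith, by linarith⟩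
  have hPn : (0:ℝ) ≤ (1 + Real.exp v) ^ m := Real.rpow_nonneg (by positivity) m
  have hPm1n : (0:ℝ) ≤ (1 + Real.exp v) ^ (m - 1) := Real.rpow_nonneg (by positivity) _
  have h1e : (0:ℝ) ≤ 1 - Real.exp v := by linarith
  rw [Hder]
  set E := Real.exp (a * (v - Real.exp v)) with hEdef
  set P := (1 + Real.exp v) ^ m with hPdef
  have hA1 : |β * (a * (1 - Real.exp v) * E) * P| ≤ β * a * Real.exp (a * v) * 2 ^ m := by
    rw [abs_mul, abs_mul, abs_of_pos hβ, abs_of_nonneg hPn,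
      abs_of_nonneg (by positivity : (0:ℝ) ≤ a * (1 - Real.exp v) * E)]
    calc β * (a * (1 - Real.exp v) * E) * P ≤ β * (a * 1 * Real.exp (a * v)) * 2 ^ m := by
          gcongr <;> linarith
      _ = β * a * Real.exp (a * v) * 2 ^ m := by ring
  have hA2 : |β * E * (m * (1 + Real.exp v) ^ (m - 1) * Real.exp v)|
      ≤ β * Real.exp (a * v) * (m * 2 ^ m * 1) := by
    rw [abs_mul, abs_mul, abs_of_pos hβ, abs_of_pos hEn,
      abs_of_nonneg (by positivity : (0:ℝ) ≤ m * (1 + Real.exp v) ^ (m - 1) * Real.exp v)]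
    gcongr
  have hA3 : |β * E * P * Real.exp v| ≤ β * Real.exp (a * v) * 2 ^ m * 1 := by
    rw [abs_mul, abs_mul, abs_mul, abs_of_pos hβ, abs_of_pos hEn, abs_of_nonneg hPn,
      abs_of_pos he0]
    gcongr
  calc |(β * (a * (1 - Real.exp v) * E) * P + β * E * (m * (1 + Real.exp v) ^ (m - 1)
        * Real.exp v)) * (Real.exp v - 1) + β * E * P * Real.exp v|
      ≤ |(β * (a * (1 - Real.exp v) * E) * P + β * E * (m * (1 + Real.exp v) ^ (m - 1)
        * Real.exp v))| * |Real.exp v - 1| + |β * E * P * Real.exp v| := by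
        rw [← abs_mul]; exact abs_add_le _ _
    _ ≤ (|β * (a * (1 - Real.exp v) * E) * P| + |β * E * (m * (1 + Real.exp v) ^ (m - 1)
        * Real.exp v)|) * 1 + |β * E * P * Real.exp v| := by
        gcongr; exact abs_add_le _ _
    _ ≤ (β * a * Real.exp (a * v) * 2 ^ m + β * Real.exp (a * v) * (m * 2 ^ m * 1)) * 1
        + β * Real.exp (a * v) * 2 ^ m * 1 := by gcongr
    _ = β * 2 ^ m * (a + m + 1) * Real.exp (a * v) := by ring

lemma Hfun_lip (a m β v₁ v₂ M : ℝ) (ha : 0 < a) (hm : 0 < m) (hβ : 0 < β)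
    (hv₁ : v₁ ≤ M) (hv₂ : v₂ ≤ M) (hM : M ≤ 0) :
    |β * Real.exp (a * (v₁ - Real.exp v₁)) * (1 + Real.exp v₁) ^ m * (Real.exp v₁ - 1)
      - β * Real.exp (a * (v₂ - Real.exp v₂)) * (1 + Real.exp v₂) ^ m * (Real.exp v₂ - 1)|
      ≤ β * 2 ^ m * (a + m + 1) * Real.exp (a * M) * |v₁ - v₂| := by
  have := Convex.norm_image_sub_le_of_norm_hasDerivWithin_le
    (f := fun v => β * Real.exp (a * (v - Real.exp v)) * (1 + Real.exp v) ^ m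
      * (Real.exp v - 1))
    (f' := Hder a m β) (s := Set.Iic M) (C := β * 2 ^ m * (a + m + 1) * Real.exp (a * M))
    (fun x hx => (Hfun_hasDerivAt a m β x).hasDerivWithinAt)
    (fun x hx => by
      have hx0 : x ≤ 0 := le_trans hx hM
      refine (Hder_bound a m β x ha hm hβ hx0).trans ?_
      have : Real.exp (a * x) ≤ Real.exp (a * M) := Real.exp_le_exp.2 (by nlinarith [hx.out])
      gcongr)
    (convex_Iic M) hv₂ hv₁
  simpa [Real.norm_eq_abs] using this

lemma aux_primitive_cont (g : ℝ → ℝ) (t₀ Mg : ℝ)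
    (hint : IntegrableOn g (Set.Iic t₀)) (hMg : ∀ τ ≤ t₀, |g τ| ≤ Mg) :
    ContinuousOn (fun t => ∫ τ in Set.Iic t, g τ) (Set.Iic t₀) := by
  have key : ∀ s ∈ Set.Iic t₀, ∀ t ∈ Set.Iic t₀, s ≤ t →
      |(∫ τ in Set.Iic t, g τ) - ∫ τ in Set.Iic s, g τ| ≤ Mg * (t - s) := by
    intro s hs t ht hst
    have hsplit : Set.Iic s ∪ Set.Ioc s t = Set.Iic t := Set.Iic_union_Ioc_eq_Iic hst
    have hdisj : Disjoint (Set.Iic s) (Set.Ioc s t) := Set.Iic_disjoint_Ioc le_rfl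
    have h1 : IntegrableOn g (Set.Iic s) := hint.mono (Set.Iic_subset_Iic.2 (hs.trans le_rfl)) le_rfl
    have h2 : IntegrableOn g (Set.Ioc s t) :=
      hint.mono (fun x hx => le_trans hx.2 ht) le_rfl
    have := MeasureTheory.setIntegral_union hdisj measurableSet_Ioc h1 h2 (f := g) (μ := volume)
    rw [hsplit] at this
    rw [this]
    rw [add_sub_cancel_left]
    have hb : |∫ τ in Set.Ioc s t, g τ| ≤ Mg * (volume (Set.Ioc s t)).toReal := by
      rw [← Real.norm_eq_abs]
      apply MeasureTheory.norm_setIntegral_le_of_norm_le_const (measure_Ioc_lt_top)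
      intro x hx
      rw [Real.norm_eq_abs]
      exact hMg x (hx.2.trans ht)
    rwa [Real.volume_Ioc, ENNReal.toReal_ofReal (by linarith)] at hb
  have hMg0 : 0 ≤ Mg := le_trans (abs_nonneg _) (hMg t₀ le_rfl)
  have hlip : LipschitzOnWith (Real.toNNReal Mg) (fun t => ∫ τ in Set.Iic t, g τ)
      (Set.Iic t₀) := by
    apply LipschitzOnWith.of_dist_le_mul
    intro x hx y hy
    rcases le_total y x with hxy | hxy
    · rw [Real.dist_eq, Real.dist_eq, Real.coe_toNNReal _ hMg0,
        abs_of_nonneg (by linarith : (0:ℝ) ≤ x - y)]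
      exact key y hy x hx hxy
    · rw [Real.dist_eq, Real.dist_eq, Real.coe_toNNReal _ hMg0, abs_sub_comm,
        abs_sub_comm x y, abs_of_nonneg (by linarith : (0:ℝ) ≤ y - x)]
      exact key x hx y hy hxy
  exact hlip.continuousOn

/-- Membership in the space `𝒳` of continuous functions on `(-∞, t₀]`
vanishing at `-∞` and bounded by `1` in sup norm. -/
def memX (t₀ : ℝ) (w : ℝ → ℝ) : Prop :=
  ContinuousOn w (Set.Iic t₀) ∧ Filter.Tendsto w Filter.atBot (nhds 0) ∧
    ∀ t ≤ t₀, |w t| ≤ 1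

set_option maxHeartbeats 4000000 in
/-- There is `t₀` such that `T(w)(t) = ∫_{-∞}^t (t-τ) h(2Nτ + w(τ)) dτ` maps
`𝒳` into itself and is a contraction in sup norm; consequently `T` has a
unique fixed point in `𝒳`. -/
theorem stmt_17 (a m β : ℝ) (ha : 0 < a) (hm : 0 < m) (hβ : 0 < β)
    (N : ℕ) (hN : 1 ≤ N) (h : ℝ → ℝ)
    (hh : ∀ v, h v =
      β * Real.exp (a * (v - Real.exp v)) * (1 + Real.exp v) ^ m * (Real.exp v - 1))
    (T : (ℝ → ℝ) → ℝ → ℝ)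
    (hT : ∀ w t, T w t = ∫ τ in Set.Iic t, (t - τ) * h (2 * N * τ + w τ)) :
    ∃ t₀ : ℝ, ∃ κ ∈ Set.Ico (0 : ℝ) 1,
      (∀ w, memX t₀ w → memX t₀ (T w)) ∧
      (∀ w₁ w₂, memX t₀ w₁ → memX t₀ w₂ → ∀ t ≤ t₀,
        |T w₁ t - T w₂ t| ≤ κ * ⨆ s : Set.Iic t₀, |w₁ s - w₂ s|) ∧
      ∃ w, memX t₀ w ∧ (∀ t ≤ t₀, T w t = w t) ∧
        ∀ w', memX t₀ w' → (∀ t ≤ t₀, T w' t = w' t) →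
          Set.EqOn w' w (Set.Iic t₀) := by
  have hN1 : (1:ℝ) ≤ (N:ℝ) := by exact_mod_cast hN
  set c : ℝ := 2 * a * N with hcdef
  have hc : 0 < c := by nlinarith
  set C₀ : ℝ := β * (2:ℝ) ^ m with hC₀def
  set Cd : ℝ := β * (2:ℝ) ^ m * (a + m + 1) with hCddef
  set D : ℝ := 4 / c ^ 2 with hDdef
  have hC₀ : 0 < C₀ := by
    have : (0:ℝ) < (2:ℝ) ^ m := Real.rpow_pos_of_pos (by norm_num) m
    positivity
  have hCd : 0 < Cd := by
    have : (0:ℝ) < (2:ℝ) ^ m := Real.rpow_pos_of_pos (by norm_num) m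
    positivity
  have hD : 0 < D := div_pos (by norm_num) (pow_pos hc 2)
  set B : ℝ := C₀ * Real.exp a * D with hBdef
  set K : ℝ := Cd * Real.exp a * D with hKdef
  have hB : 0 < B := by positivity
  have hK : 0 < K := by positivity
  set ε : ℝ := min (1 / (B + 1)) (1 / (2 * (K + 1))) with hεdef
  have hε : 0 < ε := lt_min (by positivity) (by positivity)
  set t₀ : ℝ := min (-1) (Real.log ε / c) with ht₀def
  have ht₀ : t₀ ≤ -1 := min_le_left _ _
  have hexpε : Real.exp (c * t₀) ≤ ε := by
    have h1 : t₀ ≤ Real.log ε / c := min_le_right _ _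
    have h2 : c * t₀ ≤ Real.log ε := by
      rw [le_div_iff₀ hc] at h1; linarith [mul_comm c t₀]
    calc Real.exp (c * t₀) ≤ Real.exp (Real.log ε) := Real.exp_le_exp.2 h2
      _ = ε := Real.exp_log hε
  set κ : ℝ := K * Real.exp (c * t₀) with hκdef
  have hκ0 : 0 ≤ κ := by positivity
  have hκhalf : κ ≤ 1 / 2 := by
    have h1 : κ ≤ K * (1 / (2 * (K + 1))) :=
      mul_le_mul_of_nonneg_left (hexpε.trans (min_le_right _ _)) hK.le
    have h2 : K * (1 / (2 * (K + 1))) ≤ 1 / 2 := by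
      rw [mul_one_div, div_le_div_iff₀ (by positivity) (by norm_num)]
      nlinarith
    linarith
  have hκ1 : κ < 1 := lt_of_le_of_lt hκhalf (by norm_num)
  have hBla : ∀ t ≤ t₀, B * Real.exp (c * t) ≤ 1 := by
    intro t ht
    have h1 : Real.exp (c * t) ≤ ε := by
      refine le_trans (Real.exp_le_exp.2 ?_) hexpε
      nlinarith
    have h2 : B * Real.exp (c * t) ≤ B * (1 / (B + 1)) := by
      refine mul_le_mul_of_nonneg_left (h1.trans (min_le_left _ _)) hB.le
    rw [mul_one_div] at h2
    have h3 : B / (B + 1) ≤ 1 := by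
      rw [div_le_one (by positivity)]; linarith
    linarith
  haveI hIicNE : Nonempty ↥(Set.Iic t₀) := ⟨⟨t₀, Set.self_mem_Iic⟩⟩
  -- basic bounds for the shifted argument
  have hvle : ∀ w, memX t₀ w → ∀ τ ≤ t₀,
      2 * (N:ℝ) * τ + w τ ≤ 2 * (N:ℝ) * τ + 1 ∧ 2 * (N:ℝ) * τ + 1 ≤ 0 := by
    intro w hw τ hτ
    have h1 : w τ ≤ 1 := (abs_le.1 (hw.2.2 τ hτ)).2
    have hτ1 : τ ≤ -1 := hτ.trans ht₀
    constructor
    · linarith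
    · nlinarith [mul_nonneg (sub_nonneg.2 hN1) (neg_nonneg.2 (by linarith : τ ≤ 0))]
  have hhb : ∀ w, memX t₀ w → ∀ τ ≤ t₀,
      |h (2 * N * τ + w τ)| ≤ C₀ * Real.exp a * Real.exp (c * τ) := by
    intro w hw τ hτ
    obtain ⟨hv1, hv2⟩ := hvle w hw τ hτ
    rw [hh]
    refine (Hfun_bound a m β _ ha hm hβ (by linarith)).trans ?_
    have h1 : w τ ≤ 1 := (abs_le.1 (hw.2.2 τ hτ)).2
    have h2 : Real.exp (a * (2 * N * τ + w τ)) ≤ Real.exp (c * τ + a) := by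
      apply Real.exp_le_exp.2
      rw [hcdef]; nlinarith
    calc β * 2 ^ m * Real.exp (a * (2 * N * τ + w τ))
        ≤ β * 2 ^ m * Real.exp (c * τ + a) := by
          exact mul_le_mul_of_nonneg_left h2 (by positivity)
      _ = C₀ * Real.exp a * Real.exp (c * τ) := by
          rw [Real.exp_add, hC₀def]; ring
  have hch : Continuous h := by
    have : h = fun v => β * Real.exp (a * (v - Real.exp v)) * (1 + Real.exp v) ^ m
        * (Real.exp v - 1) := funext hh
    rw [this]
    exact continuous_iff_continuousAt.2 fun x => (Hfun_hasDerivAt a m β x).continuousAt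
  have hmeasf : ∀ w, memX t₀ w →
      ContinuousOn (fun τ => h (2 * N * τ + w τ)) (Set.Iic t₀) := by
    intro w hw
    exact hch.comp_continuousOn
      (((continuous_const.mul continuous_id).continuousOn).add hw.1)
  have hintg : ∀ w, memX t₀ w → ∀ t ≤ t₀,
      IntegrableOn (fun τ => (t - τ) * h (2 * N * τ + w τ)) (Set.Iic t) := by
    intro w hw t ht
    have hmaj : IntegrableOn
        (fun τ => (C₀ * Real.exp a) * ((t - τ) * Real.exp (c * τ))) (Set.Iic t) :=
      (aux_kernel_integrableOn c t hc).const_mul _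
    refine hmaj.mono' ?_ ?_
    · refine ContinuousOn.aestronglyMeasurable ?_ measurableSet_Iic
      exact ((continuous_const.sub continuous_id).continuousOn).mul
        ((hmeasf w hw).mono (Set.Iic_subset_Iic.2 ht))
    · rw [MeasureTheory.ae_restrict_iff' measurableSet_Iic]
      filter_upwards with τ hτ
      have hτt : τ ≤ t := hτ
      rw [Real.norm_eq_abs, abs_mul, abs_of_nonneg (by linarith : (0:ℝ) ≤ t - τ)]
      calc (t - τ) * |h (2 * N * τ + w τ)|
          ≤ (t - τ) * (C₀ * Real.exp a * Real.exp (c * τ)) :=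
            mul_le_mul_of_nonneg_left (hhb w hw τ (hτt.trans ht)) (by linarith)
        _ = (C₀ * Real.exp a) * ((t - τ) * Real.exp (c * τ)) := by ring
  have hTb : ∀ w, memX t₀ w → ∀ t ≤ t₀, |T w t| ≤ B * Real.exp (c * t) := by
    intro w hw t ht
    rw [hT]
    have hmaj : IntegrableOn
        (fun τ => (C₀ * Real.exp a) * ((t - τ) * Real.exp (c * τ))) (Set.Iic t) :=
      (aux_kernel_integrableOn c t hc).const_mul _
    have h1 : |∫ τ in Set.Iic t, (t - τ) * h (2 * N * τ + w τ)|
        ≤ ∫ τ in Set.Iic t, ‖(t - τ) * h (2 * N * τ + w τ)‖ := by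
      rw [← Real.norm_eq_abs]
      exact MeasureTheory.norm_integral_le_integral_norm _
    have h2 : ∫ τ in Set.Iic t, ‖(t - τ) * h (2 * N * τ + w τ)‖
        ≤ ∫ τ in Set.Iic t, (C₀ * Real.exp a) * ((t - τ) * Real.exp (c * τ)) := by
      refine MeasureTheory.setIntegral_mono_on (hintg w hw t ht).norm hmaj
        measurableSet_Iic ?_
      intro τ hτ
      have hτt : τ ≤ t := hτ
      rw [Real.norm_eq_abs, abs_mul, abs_of_nonneg (by linarith : (0:ℝ) ≤ t - τ)]
      calc (t - τ) * |h (2 * N * τ + w τ)|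
          ≤ (t - τ) * (C₀ * Real.exp a * Real.exp (c * τ)) :=
            mul_le_mul_of_nonneg_left (hhb w hw τ (hτt.trans ht)) (by linarith)
        _ = (C₀ * Real.exp a) * ((t - τ) * Real.exp (c * τ)) := by ring
    have h3 : ∫ τ in Set.Iic t, (C₀ * Real.exp a) * ((t - τ) * Real.exp (c * τ))
        ≤ B * Real.exp (c * t) := by
      rw [MeasureTheory.integral_const_mul]
      calc (C₀ * Real.exp a) * ∫ τ in Set.Iic t, (t - τ) * Real.exp (c * τ)
          ≤ (C₀ * Real.exp a) * (4 / c ^ 2 * Real.exp (c * t)) :=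
            mul_le_mul_of_nonneg_left (aux_kernel_integral_le c t hc) (by positivity)
        _ = B * Real.exp (c * t) := by rw [hBdef, hDdef]; ring
    linarith
  -- T maps 𝒳 into itself
  have hmap : ∀ w, memX t₀ w → memX t₀ (T w) := by
    intro w hw
    have hf_int : IntegrableOn (fun τ => h (2 * N * τ + w τ)) (Set.Iic t₀) := by
      have hmaj : IntegrableOn (fun τ => (C₀ * Real.exp a) * Real.exp (c * τ))
          (Set.Iic t₀) := (aux_expc_integrableOn c t₀ hc).const_mul _
      refine hmaj.mono' ((hmeasf w hw).aestronglyMeasurable measurableSet_Iic) ?_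
      rw [MeasureTheory.ae_restrict_iff' measurableSet_Iic]
      filter_upwards with τ hτ
      rw [Real.norm_eq_abs]
      calc |h (2 * N * τ + w τ)| ≤ C₀ * Real.exp a * Real.exp (c * τ) := hhb w hw τ hτ
        _ = (C₀ * Real.exp a) * Real.exp (c * τ) := by ring
    have hτf_int : IntegrableOn (fun τ => τ * h (2 * N * τ + w τ)) (Set.Iic t₀) := by
      have hmaj : IntegrableOn
          (fun τ => (C₀ * Real.exp a * (2 / c)) * Real.exp (c / 2 * τ)) (Set.Iic t₀) :=
        (aux_expc_integrableOn (c/2) t₀ (half_pos hc)).const_mul _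
      refine hmaj.mono' ?_ ?_
      · refine ContinuousOn.aestronglyMeasurable ?_ measurableSet_Iic
        exact continuousOn_id.mul (hmeasf w hw)
      · rw [MeasureTheory.ae_restrict_iff' measurableSet_Iic]
        filter_upwards with τ hτ
        have hn : -τ ≤ (2 / c) * Real.exp (c / 2 * (-τ)) := by
          have := aux_lin_le_exp (c/2) (-τ) (half_pos hc)
          rwa [show (1:ℝ) / (c/2) = 2 / c by field_simp] at this
        rw [Real.norm_eq_abs, abs_mul]
        calc |τ| * |h (2 * N * τ + w τ)|
            ≤ |τ| * (C₀ * Real.exp a * Real.exp (c * τ)) :=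
              mul_le_mul_of_nonneg_left (hhb w hw τ hτ) (abs_nonneg _)
          _ ≤ ((2 / c) * Real.exp (c / 2 * (-τ))) * (C₀ * Real.exp a * Real.exp (c * τ)) := by
              refine mul_le_mul_of_nonneg_right ?_ (by positivity)
              rcases le_total τ 0 with h0 | h0
              · rw [abs_of_nonpos h0]; exact hn
              · rw [abs_of_nonneg h0]
                have : τ ≤ (2/c) * Real.exp (c/2 * τ) := by
                  have := aux_lin_le_exp (c/2) τ (half_pos hc)
                  rwa [show (1:ℝ) / (c/2) = 2 / c by field_simp] at this
                refine this.trans ?_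
                have hτ0 : τ ≤ 0 := hτ.out.trans (by linarith)
                have : τ = 0 := le_antisymm hτ0 h0
                simp [this]
          _ = (C₀ * Real.exp a * (2 / c)) * Real.exp (c / 2 * τ) := by
              have hE : Real.exp (c / 2 * (-τ)) * Real.exp (c * τ)
                  = Real.exp (c / 2 * τ) := by rw [← Real.exp_add]; ring_nf
              rw [← hE]; ring
    have heq : Set.EqOn (T w)
        (fun t => t * (∫ τ in Set.Iic t, h (2 * N * τ + w τ))
          - ∫ τ in Set.Iic t, τ * h (2 * N * τ + w τ)) (Set.Iic t₀) := by
      intro t ht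
      rw [hT]
      have h1 : IntegrableOn (fun τ => t * h (2 * N * τ + w τ)) (Set.Iic t) :=
        (hf_int.mono (Set.Iic_subset_Iic.2 ht) le_rfl).const_mul t
      have h2 : IntegrableOn (fun τ => τ * h (2 * N * τ + w τ)) (Set.Iic t) :=
        hτf_int.mono (Set.Iic_subset_Iic.2 ht) le_rfl
      simp only
      rw [show (fun τ => (t - τ) * h (2 * N * τ + w τ))
          = fun τ => t * h (2 * N * τ + w τ) - τ * h (2 * N * τ + w τ) from
          funext fun τ => by ring]
      rw [MeasureTheory.integral_sub h1 h2, MeasureTheory.integral_const_mul]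
    refine ⟨?_, ?_, fun t ht => (hTb w hw t ht).trans (hBla t ht)⟩
    · refine ContinuousOn.congr ?_ heq
      have hc1 : ContinuousOn (fun t => ∫ τ in Set.Iic t, h (2 * N * τ + w τ))
          (Set.Iic t₀) := by
        refine aux_primitive_cont _ t₀ (C₀ * Real.exp a * Real.exp (c * t₀)) hf_int ?_
        intro τ hτ
        refine (hhb w hw τ hτ).trans ?_
        exact mul_le_mul_of_nonneg_left (Real.exp_le_exp.2 (by nlinarith)) (by positivity)
      have hc2 : ContinuousOn (fun t => ∫ τ in Set.Iic t, τ * h (2 * N * τ + w τ))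
          (Set.Iic t₀) := by
        refine aux_primitive_cont _ t₀
          (C₀ * Real.exp a * (2 / c) * Real.exp (c / 2 * t₀)) hτf_int ?_
        intro τ hτ
        have hn : -τ ≤ (2 / c) * Real.exp (c / 2 * (-τ)) := by
          have := aux_lin_le_exp (c/2) (-τ) (half_pos hc)
          rwa [show (1:ℝ) / (c/2) = 2 / c by field_simp] at this
        have hτ0 : τ ≤ 0 := hτ.trans (by linarith)
        rw [abs_mul, abs_of_nonpos hτ0]
        calc -τ * |h (2 * N * τ + w τ)|
            ≤ ((2 / c) * Real.exp (c / 2 * (-τ))) * (C₀ * Real.exp a * Real.exp (c * τ)) :=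
              mul_le_mul hn (hhb w hw τ hτ) (abs_nonneg _) (by positivity)
          _ = C₀ * Real.exp a * (2 / c) * Real.exp (c / 2 * τ) := by
              have hE : Real.exp (c / 2 * (-τ)) * Real.exp (c * τ)
                  = Real.exp (c / 2 * τ) := by rw [← Real.exp_add]; ring_nf
              rw [← hE]; ring
          _ ≤ C₀ * Real.exp a * (2 / c) * Real.exp (c / 2 * t₀) := by
              refine mul_le_mul_of_nonneg_left (Real.exp_le_exp.2 (by nlinarith)) ?_
              positivity
      exact (continuousOn_id.mul hc1).sub hc2
    · refine squeeze_zero_norm' (a := fun t => B * Real.exp (c * t)) ?_ ?_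
      · filter_upwards [Filter.Iic_mem_atBot t₀] with t ht
        rw [Real.norm_eq_abs]
        exact hTb w hw t ht
      · have := (aux_mulexp_tendsto c hc).const_mul B
        simpa using this
  -- contraction
  have hcontr : ∀ w₁ w₂, memX t₀ w₁ → memX t₀ w₂ → ∀ t ≤ t₀,
      |T w₁ t - T w₂ t| ≤ κ * ⨆ s : Set.Iic t₀, |w₁ s - w₂ s| := by
    intro w₁ w₂ hw₁ hw₂ t ht
    have hbdd : BddAbove (Set.range fun s : Set.Iic t₀ => |w₁ s - w₂ s|) := by
      refine ⟨2, ?_⟩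
      rintro x ⟨s, rfl⟩
      have h1 := hw₁.2.2 s s.2
      have h2 := hw₂.2.2 s s.2
      calc |w₁ s - w₂ s| ≤ |w₁ s| + |w₂ s| := abs_sub _ _
        _ ≤ 2 := by linarith
    set S : ℝ := ⨆ s : Set.Iic t₀, |w₁ s - w₂ s| with hSdef
    have hS0 : 0 ≤ S :=
      le_trans (abs_nonneg _) (le_ciSup hbdd (⟨t₀, Set.self_mem_Iic⟩ : Set.Iic t₀))
    have hSle : ∀ τ, τ ≤ t₀ → |w₁ τ - w₂ τ| ≤ S := fun τ hτ =>
      le_ciSup hbdd (⟨τ, hτ⟩ : Set.Iic t₀)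
    rw [hT, hT, ← MeasureTheory.integral_sub (hintg w₁ hw₁ t ht) (hintg w₂ hw₂ t ht)]
    have hmaj : IntegrableOn
        (fun τ => (Cd * Real.exp a * S) * ((t - τ) * Real.exp (c * τ))) (Set.Iic t) :=
      (aux_kernel_integrableOn c t hc).const_mul _
    have hptw : ∀ τ ∈ Set.Iic t,
        ‖(t - τ) * h (2 * N * τ + w₁ τ) - (t - τ) * h (2 * N * τ + w₂ τ)‖
          ≤ (Cd * Real.exp a * S) * ((t - τ) * Real.exp (c * τ)) := by
      intro τ hτ
      have hτt : τ ≤ t := hτ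
      have hτ₀ : τ ≤ t₀ := hτt.trans ht
      obtain ⟨hv1, hv2⟩ := hvle w₁ hw₁ τ hτ₀
      obtain ⟨hv1', hv2'⟩ := hvle w₂ hw₂ τ hτ₀
      have hlip : |h (2 * N * τ + w₁ τ) - h (2 * N * τ + w₂ τ)|
          ≤ Cd * Real.exp (a * (2 * N * τ + 1)) * |w₁ τ - w₂ τ| := by
        rw [hh, hh]
        have := Hfun_lip a m β (2 * N * τ + w₁ τ) (2 * N * τ + w₂ τ)
          (2 * (N:ℝ) * τ + 1) ha hm hβ hv1 hv1' hv2
        rw [show (2 * (N:ℝ) * τ + w₁ τ) - (2 * N * τ + w₂ τ) = w₁ τ - w₂ τ by ring] at this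
        rwa [hCddef]
      have hexpeq : Real.exp (a * (2 * N * τ + 1)) = Real.exp a * Real.exp (c * τ) := by
        rw [← Real.exp_add, hcdef]; ring_nf
      rw [Real.norm_eq_abs, ← mul_sub, abs_mul,
        abs_of_nonneg (by linarith : (0:ℝ) ≤ t - τ)]
      calc (t - τ) * |h (2 * N * τ + w₁ τ) - h (2 * N * τ + w₂ τ)|
          ≤ (t - τ) * (Cd * Real.exp (a * (2 * N * τ + 1)) * |w₁ τ - w₂ τ|) :=
            mul_le_mul_of_nonneg_left hlip (by linarith)
        _ ≤ (t - τ) * (Cd * Real.exp (a * (2 * N * τ + 1)) * S) := by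
            refine mul_le_mul_of_nonneg_left ?_ (by linarith)
            exact mul_le_mul_of_nonneg_left (hSle τ hτ₀) (by positivity)
        _ = (Cd * Real.exp a * S) * ((t - τ) * Real.exp (c * τ)) := by
            rw [hexpeq]; ring
    have h1 : |∫ τ in Set.Iic t,
        ((t - τ) * h (2 * N * τ + w₁ τ) - (t - τ) * h (2 * N * τ + w₂ τ))|
        ≤ ∫ τ in Set.Iic t, (Cd * Real.exp a * S) * ((t - τ) * Real.exp (c * τ)) := by
      rw [← Real.norm_eq_abs]
      refine le_trans (MeasureTheory.norm_integral_le_integral_norm _) ?_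
      refine MeasureTheory.setIntegral_mono_on
        (((hintg w₁ hw₁ t ht).sub (hintg w₂ hw₂ t ht)).norm) hmaj measurableSet_Iic hptw
    refine h1.trans ?_
    rw [MeasureTheory.integral_const_mul]
    calc (Cd * Real.exp a * S) * ∫ τ in Set.Iic t, (t - τ) * Real.exp (c * τ)
        ≤ (Cd * Real.exp a * S) * (4 / c ^ 2 * Real.exp (c * t)) :=
          mul_le_mul_of_nonneg_left (aux_kernel_integral_le c t hc) (by positivity)
      _ = (K * Real.exp (c * t)) * S := by rw [hKdef, hDdef]; ring
      _ ≤ (K * Real.exp (c * t₀)) * S := by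
          refine mul_le_mul_of_nonneg_right ?_ hS0
          exact mul_le_mul_of_nonneg_left (Real.exp_le_exp.2 (by nlinarith)) hK.le
      _ = κ * S := by rw [hκdef]
  refine ⟨t₀, κ, ⟨hκ0, hκ1⟩, hmap, hcontr, ?_⟩
  -- Picard iteration
  set W : ℕ → ℝ → ℝ := fun n => T^[n] (fun _ => 0) with hWdef
  have hWsucc : ∀ n, W (n + 1) = T (W n) := fun n => Function.iterate_succ_apply' T n _
  have hW0 : W 0 = fun _ => 0 := rfl
  have hWmem : ∀ n, memX t₀ (W n) := by
    intro n
    induction n with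
    | zero => exact ⟨continuousOn_const, tendsto_const_nhds, fun t ht => by simp [hW0]⟩
    | succ n ih => rw [hWsucc]; exact hmap _ ih
  have hWd : ∀ n, ∀ t, t ≤ t₀ → |W (n + 1) t - W n t| ≤ κ ^ n := by
    intro n
    induction n with
    | zero =>
      intro t ht
      rw [hWsucc 0, pow_zero]
      have h0 : W 0 t = 0 := congrFun hW0 t
      rw [h0, sub_zero]
      exact (hmap _ (hWmem 0)).2.2 t ht
    | succ n ih =>
      intro t ht
      have e1 : W (n+2) t - W (n+1) t = T (W (n+1)) t - T (W n) t := by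
        rw [hWsucc (n+1), hWsucc n]
      rw [e1]
      refine (hcontr (W (n+1)) (W n) (hWmem _) (hWmem _) t ht).trans ?_
      have hsup : (⨆ s : Set.Iic t₀, |W (n+1) s - W n s|) ≤ κ ^ n :=
        ciSup_le fun s => ih s s.2
      calc κ * ⨆ s : Set.Iic t₀, |W (n+1) s - W n s| ≤ κ * κ ^ n :=
            mul_le_mul_of_nonneg_left hsup hκ0
        _ = κ ^ (n + 1) := by rw [pow_succ]; ring
  have hdist : ∀ t, t ≤ t₀ → ∀ n, dist (W n t) (W (n + 1) t) ≤ 1 * κ ^ n := by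
    intro t ht n
    rw [Real.dist_eq, abs_sub_comm, one_mul]
    exact hWd n t ht
  have hex : ∀ t, t ≤ t₀ → ∃ l, Filter.Tendsto (fun n => W n t) Filter.atTop (nhds l) :=
    fun t ht => cauchySeq_tendsto_of_complete
      (cauchySeq_of_le_geometric κ 1 hκ1 (hdist t ht))
  set wlim : ℝ → ℝ := fun t => limUnder Filter.atTop fun n => W n t with hwlimdef
  have hlim : ∀ t, t ≤ t₀ →
      Filter.Tendsto (fun n => W n t) Filter.atTop (nhds (wlim t)) := by
    intro t ht
    obtain ⟨l, hl⟩ := hex t ht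
    have hwl : wlim t = l := by rw [hwlimdef]; exact hl.limUnder_eq
    rw [hwl]; exact hl
  have hWw : ∀ n, ∀ t, t ≤ t₀ → |W n t - wlim t| ≤ κ ^ n / (1 - κ) := by
    intro n t ht
    have := dist_le_of_le_geometric_of_tendsto κ 1 hκ1 (hdist t ht) (hlim t ht) n
    rwa [Real.dist_eq, one_mul] at this
  have hgeo : Filter.Tendsto (fun n : ℕ => κ ^ n / (1 - κ)) Filter.atTop (nhds 0) := by
    have := tendsto_pow_atTop_nhds_zero_of_lt_one hκ0 hκ1
    simpa using this.div_const (1 - κ)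
  have hwmem : memX t₀ wlim := by
    refine ⟨?_, ?_, ?_⟩
    · have hunif : TendstoUniformlyOn (fun n t => W n t) wlim Filter.atTop
          (Set.Iic t₀) := by
        rw [Metric.tendstoUniformlyOn_iff]
        intro δ hδ
        filter_upwards [hgeo.eventually (gt_mem_nhds hδ)] with n hn x hx
        rw [dist_comm, Real.dist_eq]
        exact lt_of_le_of_lt (hWw n x hx) hn
      exact hunif.continuousOn (Filter.Eventually.of_forall fun n => (hWmem n).1).frequently
    · rw [Metric.tendsto_nhds]
      intro δ hδ
      obtain ⟨n, hn⟩ := (hgeo.eventually (gt_mem_nhds (half_pos hδ))).exists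
      have h2 := Metric.tendsto_nhds.1 (hWmem n).2.1 (δ/2) (half_pos hδ)
      filter_upwards [h2, Filter.Iic_mem_atBot t₀] with t h1 ht'
      rw [Real.dist_eq, sub_zero] at h1 ⊢
      have h3 : |wlim t - W n t| ≤ κ ^ n / (1 - κ) := by
        rw [abs_sub_comm]; exact hWw n t ht'
      calc |wlim t| = |(wlim t - W n t) + W n t| := by ring_nf
        _ ≤ |wlim t - W n t| + |W n t| := abs_add_le _ _
        _ < δ := by linarith
    · intro t ht
      exact le_of_tendsto (hlim t ht).abs
        (Filter.Eventually.of_forall fun n => (hWmem n).2.2 t ht)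
  have hbdd' : ∀ (u : ℝ → ℝ), memX t₀ u →
      BddAbove (Set.range fun s : Set.Iic t₀ => |u s - wlim s|) := by
    intro u hu
    refine ⟨2, ?_⟩
    rintro x ⟨s, rfl⟩
    have h1 := hu.2.2 s s.2
    have h2 := hwmem.2.2 s s.2
    calc |u s - wlim s| ≤ |u s| + |wlim s| := abs_sub _ _
      _ ≤ 2 := by linarith
  have hfix : ∀ t ≤ t₀, T wlim t = wlim t := by
    intro t ht
    have key : ∀ n : ℕ, |T wlim t - wlim t|
        ≤ κ * (κ ^ n / (1 - κ)) + κ ^ (n + 1) / (1 - κ) := by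
      intro n
      have h1 : |T wlim t - T (W n) t| ≤ κ * (κ ^ n / (1 - κ)) := by
        refine (hcontr wlim (W n) hwmem (hWmem n) t ht).trans
          (mul_le_mul_of_nonneg_left ?_ hκ0)
        refine ciSup_le fun s => ?_
        have := hWw n s s.2
        rwa [abs_sub_comm] at this
      have h2 : |W (n + 1) t - wlim t| ≤ κ ^ (n + 1) / (1 - κ) := hWw (n + 1) t ht
      calc |T wlim t - wlim t|
          ≤ |T wlim t - T (W n) t| + |T (W n) t - wlim t| := abs_sub_le _ _ _
        _ ≤ κ * (κ ^ n / (1 - κ)) + κ ^ (n + 1) / (1 - κ) := by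
            rw [← hWsucc n] at *
            exact add_le_add h1 h2
    have hlim0 : Filter.Tendsto
        (fun n : ℕ => κ * (κ ^ n / (1 - κ)) + κ ^ (n + 1) / (1 - κ))
        Filter.atTop (nhds 0) := by
      have h1 := hgeo.const_mul κ
      have h2 : Filter.Tendsto (fun n : ℕ => κ ^ (n + 1) / (1 - κ))
          Filter.atTop (nhds 0) := hgeo.comp (Filter.tendsto_add_atTop_nat 1)
      simpa using h1.add h2
    have h0 : |T wlim t - wlim t| ≤ 0 :=
      ge_of_tendsto hlim0 (Filter.Eventually.of_forall key)
    have := abs_nonneg (T wlim t - wlim t)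
    have heq0 : |T wlim t - wlim t| = 0 := le_antisymm h0 this
    rw [abs_eq_zero, sub_eq_zero] at heq0
    exact heq0
  refine ⟨wlim, hwmem, hfix, ?_⟩
  intro w' hw' hfix' x hx
  set S' : ℝ := ⨆ s : Set.Iic t₀, |w' s - wlim s| with hS'def
  have hS'0 : 0 ≤ S' :=
    le_trans (abs_nonneg _) (le_ciSup (hbdd' w' hw') (⟨t₀, Set.self_mem_Iic⟩ : Set.Iic t₀))
  have hS'κ : S' ≤ κ * S' := by
    refine ciSup_le fun s => ?_
    rw [← hfix' s s.2, ← hfix s s.2]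
    exact hcontr w' wlim hw' hwmem s s.2
  have hS'le : S' ≤ 0 := by nlinarith
  have : |w' x - wlim x| ≤ 0 :=
    le_trans (le_ciSup (hbdd' w' hw') (⟨x, hx⟩ : Set.Iic t₀)) hS'le
  have heq0 : |w' x - wlim x| = 0 := le_antisymm this (abs_nonneg _)
  rw [abs_eq_zero, sub_eq_zero] at heq0
  exact heq0
end
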